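/- arXiv:math/0402350 — 13 statements merged into one kernel-verified Lean document; each statement's English description precedes it below -/
import Mathlib

section
/- The Stern–Brocot labelling is injective as a map to fractions: if w and w' are finite Boolean lists with StBr(w) = (r,s) and StBr(w') = (r',s'), and r·s' = r'·s, then w = w'. Consequently the relation <_Q is a total order on the set of all paths. -/
/-!
Below a node with bounds `L <_Q R` every label lies strictly between `L` and `R`, and the
node's own label, the mediant of `L` and `R`, is the upper bound of its left subtree and the
lower bound of its right one. So at the first place where two distinct paths part (or one of
them stops) the label of that node separates their labels, and labels of distinct paths are
`<_Q`-comparable, hence distinct as fractions.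
-/

/-- One step of the Stern–Brocot state-passing recursion: the state is the pair
`(L, R)` of bounds; a `false` step (left child) replaces `R` by `L + R`, a `true`
step (right child) replaces `L` by `L + R`. -/
def sbStep : ((ℕ × ℕ) × (ℕ × ℕ)) → Bool → ((ℕ × ℕ) × (ℕ × ℕ))
  | (L, R), false => (L, (L.1 + R.1, L.2 + R.2))
  | (L, R), true  => ((L.1 + R.1, L.2 + R.2), R)

/-- The bounds `(L(w), R(w))` of the node of the Stern–Brocot tree addressed by
the path `w`, starting from `((0,1), (1,0))` at the root. -/
def sbBounds (w : List Bool) : (ℕ × ℕ) × (ℕ × ℕ) :=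
  w.foldl sbStep ((0, 1), (1, 0))

/-- The left godfather pair `L(w)`. -/
def sbL (w : List Bool) : ℕ × ℕ := (sbBounds w).1

/-- The right godfather pair `R(w)`. -/
def sbR (w : List Bool) : ℕ × ℕ := (sbBounds w).2

/-- The Stern–Brocot pair `StBr(w) = L(w) + R(w)` (componentwise sum). -/
def stBr (w : List Bool) : ℕ × ℕ :=
  ((sbL w).1 + (sbR w).1, (sbL w).2 + (sbR w).2)

/-- The order `<_Q` on pairs of nonnegative integers:
`(r,s) <_Q (r',s')` iff `r·s' < r'·s`. -/
def ltQ (p q : ℕ × ℕ) : Prop := p.1 * q.2 < q.1 * p.2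

/-- The order `≤_Q` on pairs of nonnegative integers:
`(r,s) ≤_Q (r',s')` iff `r·s' ≤ r'·s`. -/
def leQ (p q : ℕ × ℕ) : Prop := p.1 * q.2 ≤ q.1 * p.2

/-- The weight `|(r,s)| := r + s` of a pair. -/
def wtQ (p : ℕ × ℕ) : ℕ := p.1 + p.2

def mediant (p q : ℕ × ℕ) : ℕ × ℕ := (p.1 + q.1, p.2 + q.2)

/-- The Stern–Brocot pair of the node reached by the path `v` from a node with bounds `s`. -/
def sbLabel (s : (ℕ × ℕ) × (ℕ × ℕ)) (v : List Bool) : ℕ × ℕ :=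
  mediant (v.foldl sbStep s).1 (v.foldl sbStep s).2

lemma sbLabel_cons (s : (ℕ × ℕ) × (ℕ × ℕ)) (b : Bool) (v : List Bool) :
    sbLabel s (b :: v) = sbLabel (sbStep s b) v := rfl

section ltQ

variable {p q r : ℕ × ℕ}

lemma ltQ_irrefl (p : ℕ × ℕ) : ¬ ltQ p p := lt_irrefl _

lemma ltQ.ne (h : ltQ p q) : p.1 * q.2 ≠ q.1 * p.2 := Nat.ne_of_lt h

-- Multiplying the two inequalities cancels `q.1 * q.2`, which is positive because the product is.
lemma ltQ_trans (hpq : ltQ p q) (hqr : ltQ q r) : ltQ p r := by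
  unfold ltQ at *
  have key : p.1 * r.2 * (q.1 * q.2) < r.1 * p.2 * (q.1 * q.2) :=
    calc p.1 * r.2 * (q.1 * q.2) = (p.1 * q.2) * (q.1 * r.2) := by ring
      _ < (q.1 * p.2) * (r.1 * q.2) := Nat.mul_lt_mul_of_lt_of_lt hpq hqr
      _ = r.1 * p.2 * (q.1 * q.2) := by ring
  exact lt_of_mul_lt_mul_right key (Nat.zero_le _)

lemma ltQ_mediant_left (h : ltQ p q) : ltQ p (mediant p q) := by
  unfold ltQ mediant at *
  dsimp only
  nlinarith

lemma mediant_ltQ_right (h : ltQ p q) : ltQ (mediant p q) q := by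
  unfold ltQ mediant at *
  dsimp only
  nlinarith

end ltQ

section sbLabel

variable {s : (ℕ × ℕ) × (ℕ × ℕ)}

lemma ltQ_sbStep (hs : ltQ s.1 s.2) (b : Bool) : ltQ (sbStep s b).1 (sbStep s b).2 := by
  cases b
  · exact ltQ_mediant_left hs
  · exact mediant_ltQ_right hs

theorem ltQ_sbLabel_and_sbLabel_ltQ (hs : ltQ s.1 s.2) (v : List Bool) :
    ltQ s.1 (sbLabel s v) ∧ ltQ (sbLabel s v) s.2 := by
  induction v generalizing s with
  | nil => exact ⟨ltQ_mediant_left hs, mediant_ltQ_right hs⟩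
  | cons b v ih =>
    obtain ⟨hleft, hright⟩ := ih (ltQ_sbStep hs b)
    rw [sbLabel_cons]
    cases b
    · exact ⟨hleft, ltQ_trans hright (mediant_ltQ_right hs)⟩
    · exact ⟨ltQ_trans (ltQ_mediant_left hs) hleft, hright⟩

lemma sbLabel_false_cons_ltQ_nil (hs : ltQ s.1 s.2) (v : List Bool) :
    ltQ (sbLabel s (false :: v)) (sbLabel s []) :=
  (ltQ_sbLabel_and_sbLabel_ltQ (ltQ_sbStep hs false) v).2

lemma sbLabel_nil_ltQ_true_cons (hs : ltQ s.1 s.2) (v : List Bool) :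
    ltQ (sbLabel s []) (sbLabel s (true :: v)) :=
  (ltQ_sbLabel_and_sbLabel_ltQ (ltQ_sbStep hs true) v).1

lemma sbLabel_false_cons_ltQ_true_cons (hs : ltQ s.1 s.2) (u v : List Bool) :
    ltQ (sbLabel s (false :: u)) (sbLabel s (true :: v)) :=
  ltQ_trans (sbLabel_false_cons_ltQ_nil hs u) (sbLabel_nil_ltQ_true_cons hs v)

lemma sbLabel_nil_ltQ_or_ltQ_cons (hs : ltQ s.1 s.2) (b : Bool) (v : List Bool) :
    ltQ (sbLabel s []) (sbLabel s (b :: v)) ∨ ltQ (sbLabel s (b :: v)) (sbLabel s []) := by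
  cases b
  · exact .inr (sbLabel_false_cons_ltQ_nil hs v)
  · exact .inl (sbLabel_nil_ltQ_true_cons hs v)

theorem sbLabel_ltQ_or_ltQ (hs : ltQ s.1 s.2) {u v : List Bool} (huv : u ≠ v) :
    ltQ (sbLabel s u) (sbLabel s v) ∨ ltQ (sbLabel s v) (sbLabel s u) := by
  induction u generalizing s v with
  | nil =>
    obtain _ | ⟨b, v⟩ := v
    · exact absurd rfl huv
    · exact sbLabel_nil_ltQ_or_ltQ_cons hs b v
  | cons b u ih =>
    obtain _ | ⟨c, v⟩ := v
    · exact (sbLabel_nil_ltQ_or_ltQ_cons hs b u).symm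
    by_cases hbc : b = c
    · subst hbc
      exact ih (ltQ_sbStep hs b) (mt (congrArg (b :: ·)) huv)
    · cases b <;> cases c
      · exact absurd rfl hbc
      · exact .inl (sbLabel_false_cons_ltQ_true_cons hs u v)
      · exact .inr (sbLabel_false_cons_ltQ_true_cons hs v u)
      · exact absurd rfl hbc

end sbLabel

/-- The Stern–Brocot labelling is injective as a map to fractions: if
`StBr(w) = (r,s)`, `StBr(w') = (r',s')` and `r·s' = r'·s` then `w = w'`;
consequently `<_Q` is a (strict) total order on the set of all paths. -/
theorem sternBrocot_injective_and_totalOrder :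
    (∀ w w' : List Bool,
      (stBr w).1 * (stBr w').2 = (stBr w').1 * (stBr w).2 → w = w') ∧
    IsStrictTotalOrder (List Bool) (fun w w' => ltQ (stBr w) (stBr w')) := by
  have hcmp : ∀ {w w' : List Bool}, w ≠ w' →
      ltQ (stBr w) (stBr w') ∨ ltQ (stBr w') (stBr w) :=
    sbLabel_ltQ_or_ltQ (s := ((0, 1), (1, 0))) (by norm_num [ltQ])
  refine ⟨fun w w' heq => ?_, ?_⟩
  · by_contra hne
    rcases hcmp hne with h | h
    · exact h.ne heq
    · exact h.ne heq.symm
  · exact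
      { trichotomous := fun w w' h h' => by_contra fun hne => (hcmp hne).elim h h'
        irrefl := fun w => ltQ_irrefl _
        trans := fun _ _ _ => ltQ_trans }
end

section
/- Let a and b be finite Boolean lists. If StBr(a) <_Q StBr(b) and |StBr(a)| < |StBr(b)| + |L(b)|, then StBr(a) ≤_Q L(b). -/
lemma sb_det (w : List Bool) : ∀ st : (ℕ × ℕ) × (ℕ × ℕ),
    st.2.1 * st.1.2 = st.1.1 * st.2.2 + 1 →
    (w.foldl sbStep st).2.1 * (w.foldl sbStep st).1.2
      = (w.foldl sbStep st).1.1 * (w.foldl sbStep st).2.2 + 1 := by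
  induction w with
  | nil => intro st h; exact h
  | cons b w ih =>
    intro st h
    simp only [List.foldl_cons]
    apply ih
    obtain ⟨⟨L1, L2⟩, R1, R2⟩ := st
    cases b <;> simp [sbStep] at h ⊢ <;> nlinarith [h]


lemma sb_key (u v L1 L2 R1 R2 : ℕ) (hdet : R1 * L2 = L1 * R2 + 1)
    (h1 : u * (L2 + R2) < (L1 + R1) * v) (h : L1 * v < u * L2) :
    (L1 + R1) + L1 ≤ u ∧ (L2 + R2) + L2 ≤ v := by
  have hA : L1 * v + 1 ≤ u * L2 := h
  have hB : u * (L2 + R2) + 1 ≤ (L1 + R1) * v := h1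
  have hdu : u * (R1 * L2) = u * (L1 * R2 + 1) := by rw [hdet]
  have hdv : v * (R1 * L2) = v * (L1 * R2 + 1) := by rw [hdet]
  constructor
  · nlinarith [mul_le_mul_right hA (L1 + R1), mul_le_mul_right hB L1, hdu]
  · nlinarith [mul_le_mul_right hA (L2 + R2), mul_le_mul_right hB L2, hdv]

/-- If `StBr(a) <_Q StBr(b)` and `|StBr(a)| < |StBr(b)| + |L(b)|` then
`StBr(a) ≤_Q L(b)`. -/
theorem sternBrocot_le_left_godfather (a b : List Bool)
    (h1 : ltQ (stBr a) (stBr b))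
    (h2 : wtQ (stBr a) < wtQ (stBr b) + wtQ (sbL b)) :
    leQ (stBr a) (sbL b) := by
  by_contra h
  simp only [leQ, not_le] at h
  have hdet : (sbBounds b).2.1 * (sbBounds b).1.2
      = (sbBounds b).1.1 * (sbBounds b).2.2 + 1 :=
    sb_det b ((0,1),(1,0)) (by norm_num)
  have key := sb_key (stBr a).1 (stBr a).2 (sbBounds b).1.1 (sbBounds b).1.2
    (sbBounds b).2.1 (sbBounds b).2.2 hdet h1 h
  have e1 : wtQ (stBr a) = (stBr a).1 + (stBr a).2 := rfl
  have e2 : wtQ (stBr b) = ((sbBounds b).1.1 + (sbBounds b).2.1)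
      + ((sbBounds b).1.2 + (sbBounds b).2.2) := by
    simp [wtQ, stBr, sbL, sbR]
  have e3 : wtQ (sbL b) = (sbBounds b).1.1 + (sbBounds b).1.2 := rfl
  rw [e1, e2, e3] at h2
  omega
end

section
/- Let w be a finite Boolean list containing at least one 'true' entry, and let u be the left-godfather node of w, i.e. the path obtained from w by deleting the final (possibly empty) block of 'false' entries together with the preceding 'true' entry (so that StBr(u) = L(w)). Then StBr(w) <_Q R(u). -/
/-!
Writing `L = L(u)` and `R = R(u)`, the `true` step followed by `n` `false` steps gives
`L(w) = L + R` and `R(w) = n • (L + R) + R`, hence `StBr(w) = (n + 1) • (L + R) + R`.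
Adding the right-hand pair `R` or scaling the left-hand pair by a positive integer does not
change a `<_Q` comparison with `R`, so the claim reduces to `L <_Q R`, which follows from the
unimodularity `R.1 * L.2 = L.1 * R.2 + 1` preserved by every step of the recursion.
-/

theorem ltQ_add_right_iff {p q : ℕ × ℕ} : ltQ (p + q) q ↔ ltQ p q := by
  simp only [ltQ, Prod.fst_add, Prod.snd_add]
  rw [add_mul, mul_add, Nat.add_lt_add_iff_right]

theorem ltQ_nsmul_left_iff {k : ℕ} (hk : 0 < k) {p q : ℕ × ℕ} :
    ltQ (k • p) q ↔ ltQ p q := by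
  simp only [ltQ, Prod.smul_fst, Prod.smul_snd, smul_eq_mul]
  rw [mul_assoc, mul_left_comm q.1, mul_lt_mul_iff_right₀ hk]

theorem sbBounds_append (u v : List Bool) :
    sbBounds (u ++ v) = v.foldl sbStep (sbBounds u) :=
  List.foldl_append

theorem foldl_sbStep_replicate_false (n : ℕ) (L R : ℕ × ℕ) :
    (List.replicate n false).foldl sbStep (L, R) = (L, n • L + R) := by
  induction n generalizing R with
  | zero => simp
  | succ n ih =>
    rw [List.replicate_succ, List.foldl_cons]
    change (List.replicate n false).foldl sbStep (L, L + R) = _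
    rw [ih, succ_nsmul, add_assoc]

theorem sbR_fst_mul_sbL_snd (w : List Bool) :
    (sbR w).1 * (sbL w).2 = (sbL w).1 * (sbR w).2 + 1 := by
  induction w using List.reverseRecOn with
  | nil => rfl
  | append_singleton w b ih =>
    simp only [sbL, sbR, sbBounds_append, List.foldl_cons, List.foldl_nil] at ih ⊢
    generalize sbBounds w = s at ih ⊢
    obtain ⟨⟨l₁, l₂⟩, ⟨r₁, r₂⟩⟩ := s
    cases b <;> simp only [sbStep] at ih ⊢ <;> nlinarith

theorem ltQ_sbL_sbR (w : List Bool) : ltQ (sbL w) (sbR w) := by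
  have := sbR_fst_mul_sbL_snd w
  unfold ltQ
  omega

/-- Let `w` contain at least one `true` entry, and let `u` be the left-godfather
node of `w`: `w = u ++ true :: (replicate n false)` for some `n`, i.e. `u` is
obtained from `w` by deleting the final block of `false` entries together with
the preceding `true` entry (so `StBr(u) = L(w)`). Then `StBr(w) <_Q R(u)`. -/
theorem sternBrocot_lt_rgf_of_lgf (w u : List Bool) (n : ℕ)
    (hw : w = u ++ true :: List.replicate n false) :
    ltQ (stBr w) (sbR u) := by
  set L := sbL u
  set R := sbR u
  have hbounds : sbBounds w = (L + R, n • (L + R) + R) := by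
    rw [hw, sbBounds_append, List.foldl_cons]
    exact foldl_sbStep_replicate_false n (L + R) R
  have hstBr : stBr w = (n + 1) • (L + R) + R := by
    change (sbBounds w).1 + (sbBounds w).2 = _
    rw [hbounds]
    change (L + R) + (n • (L + R) + R) = _
    rw [succ_nsmul', add_assoc (L + R)]
  rw [hstBr, ltQ_add_right_iff, ltQ_nsmul_left_iff n.succ_pos, ltQ_add_right_iff]
  exact ltQ_sbL_sbR u
end

section
/- Let w be a finite Boolean list containing at least one 'false' entry, and let u be the right-godfather node of w, i.e. the path obtained from w by deleting the final (possibly empty) block of 'true' entries together with the preceding 'false' entry (so that StBr(u) = R(w)). Then L(u) <_Q StBr(w). -/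

lemma sb_det_foldl (w : List Bool) : ∀ s : (ℕ × ℕ) × (ℕ × ℕ),
    s.2.1 * s.1.2 = s.1.1 * s.2.2 + 1 →
    (w.foldl sbStep s).2.1 * (w.foldl sbStep s).1.2
      = (w.foldl sbStep s).1.1 * (w.foldl sbStep s).2.2 + 1 := by
  induction w with
  | nil => intro s h; exact h
  | cons b t ih =>
    rintro ⟨⟨a, b'⟩, ⟨c, d⟩⟩ h
    simp only at h
    cases b
    · rw [List.foldl_cons]
      show (t.foldl sbStep ((a, b'), (a + c, b' + d))).2.1 * _ = _
      apply ih
      simp only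
      nlinarith [h]
    · rw [List.foldl_cons]
      show (t.foldl sbStep ((a + c, b' + d), (c, d))).2.1 * _ = _
      apply ih
      simp only
      nlinarith [h]

lemma sb_det_s7 (w : List Bool) :
    (sbBounds w).2.1 * (sbBounds w).1.2 = (sbBounds w).1.1 * (sbBounds w).2.2 + 1 :=
  sb_det_foldl w _ (by norm_num)

lemma sb_trues (n : ℕ) : ∀ L R : ℕ × ℕ,
    (List.replicate n true).foldl sbStep (L, R)
      = ((L.1 + n * R.1, L.2 + n * R.2), R) := by
  induction n with
  | zero => intro L R; simp
  | succ m ih =>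
    intro L R
    rw [List.replicate_succ, List.foldl_cons]
    show (List.replicate m true).foldl sbStep ((L.1 + R.1, L.2 + R.2), R) = _
    rw [ih]
    simp; constructor <;> ring

/-- Let `w` contain at least one `false` entry, and let `u` be the
right-godfather node of `w`: `w = u ++ false :: (replicate n true)` for some
`n`, i.e. `u` is obtained from `w` by deleting the final block of `true`
entries together with the preceding `false` entry (so `StBr(u) = R(w)`).
Then `L(u) <_Q StBr(w)`. -/
theorem sternBrocot_lgf_lt_of_rgf (w u : List Bool) (n : ℕ)
    (hw : w = u ++ false :: List.replicate n true) :
    ltQ (sbL u) (stBr w) := by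
  subst hw
  have hdet := sb_det_s7 u
  set L := sbL u with hL
  set R := sbR u with hR
  have hb : sbBounds (u ++ false :: List.replicate n true)
      = ((L.1 + n * (L.1 + R.1), L.2 + n * (L.2 + R.2)), (L.1 + R.1, L.2 + R.2)) := by
    rw [sbBounds, List.foldl_append, List.foldl_cons]
    show (List.replicate n true).foldl sbStep (L, (L.1 + R.1, L.2 + R.2)) = _
    rw [sb_trues]
  simp only [ltQ, stBr, sbL, sbR, hb]
  have : R.1 * L.2 = L.1 * R.2 + 1 := hdet
  nlinarith [this]
end

section
/- Let a and b be finite Boolean lists with |StBr(b)| ≤ |StBr(a)|. If L(a) <_Q StBr(b) and StBr(b) <_Q R(a), then b = a. -/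
def sbInv (S : (ℕ × ℕ) × (ℕ × ℕ)) : Prop := S.1.2 * S.2.1 = S.1.1 * S.2.2 + 1
def sbMed (S : (ℕ × ℕ) × (ℕ × ℕ)) : ℕ × ℕ := (S.1.1 + S.2.1, S.1.2 + S.2.2)

lemma sbInv_pos {S} (h : sbInv S) : 1 ≤ S.1.2 ∧ 1 ≤ S.2.1 := by
  obtain ⟨⟨a, b⟩, c, d⟩ := S
  simp only [sbInv] at h
  constructor <;> nlinarith

lemma sbInv_step {S} (h : sbInv S) (x : Bool) : sbInv (sbStep S x) := by
  obtain ⟨⟨a, b⟩, c, d⟩ := S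
  cases x <;> simp [sbStep, sbInv] at * <;> nlinarith

lemma sbInv_fold {S} (h : sbInv S) (w : List Bool) : sbInv (w.foldl sbStep S) := by
  induction w generalizing S with
  | nil => exact h
  | cons x w ih => exact ih (sbInv_step h x)

lemma med_bounds {S} (h : sbInv S) : ltQ S.1 (sbMed S) ∧ ltQ (sbMed S) S.2 := by
  obtain ⟨⟨a, b⟩, c, d⟩ := S
  simp [sbInv, ltQ, sbMed] at *
  constructor <;> nlinarith

lemma wt_fold {S} (h : sbInv S) (w : List Bool) :
    wtQ (sbMed S) + w.length ≤ wtQ (sbMed (w.foldl sbStep S)) := by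
  induction w generalizing S with
  | nil => simp
  | cons x w ih =>
      have hp := sbInv_pos h
      have := ih (sbInv_step h x)
      obtain ⟨⟨a, b⟩, c, d⟩ := S
      cases x <;> simp [sbStep, sbMed, wtQ] at * <;> omega

lemma fold_within {S} (h : sbInv S) (w : List Bool) :
    leQ S.1 (w.foldl sbStep S).1 ∧ leQ (w.foldl sbStep S).2 S.2 := by
  induction w generalizing S with
  | nil => exact ⟨le_refl _, le_refl _⟩
  | cons x w ih =>
      have hp := sbInv_pos h
      have hmed := med_bounds h
      have ih' := ih (sbInv_step h x)
      obtain ⟨⟨a, b⟩, c, d⟩ := S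
      have hFinv := sbInv_fold (sbInv_step h x) w
      have hFp := sbInv_pos hFinv
      cases x <;>
        simp only [List.foldl_cons] at * <;>
        simp [sbStep, sbMed, ltQ, leQ, sbInv] at * <;>
        obtain ⟨ih1, ih2⟩ := ih'
      · exact ⟨ih1, by nlinarith⟩
      · exact ⟨by nlinarith, ih2⟩

lemma brS_bounds {S} (h : sbInv S) (w : List Bool) :
    ltQ S.1 (sbMed (w.foldl sbStep S)) ∧ ltQ (sbMed (w.foldl sbStep S)) S.2 := by
  have hF := sbInv_fold h w
  have hFm := med_bounds hF
  have hw := fold_within h w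
  have hp := sbInv_pos h
  have hFp := sbInv_pos hF
  set F := w.foldl sbStep S with hFdef
  obtain ⟨⟨a, b⟩, c, d⟩ := S
  obtain ⟨⟨e, f⟩, g, k⟩ := F
  simp [ltQ, leQ, sbMed, sbInv] at *
  constructor <;> nlinarith

lemma sb_gen (a : List Bool) : ∀ (S : (ℕ × ℕ) × (ℕ × ℕ)) (b : List Bool), sbInv S →
    wtQ (sbMed (b.foldl sbStep S)) ≤ wtQ (sbMed (a.foldl sbStep S)) →
    ltQ (a.foldl sbStep S).1 (sbMed (b.foldl sbStep S)) →
    ltQ (sbMed (b.foldl sbStep S)) (a.foldl sbStep S).2 →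
    b = a := by
  induction a with
  | nil =>
      intro S b hInv hwt h1 h2
      cases b with
      | nil => rfl
      | cons y b' =>
          exfalso
          have := wt_fold hInv (y :: b')
          simp only [List.length_cons, List.foldl_nil] at *
          omega
  | cons x a' ih =>
      intro S b hInv hwt h1 h2
      have hS' := sbInv_step hInv x
      have hwithin := fold_within hS' a'
      cases b with
      | nil =>
          exfalso
          simp only [List.foldl_cons, List.foldl_nil] at *
          -- sbMed S is strictly inside the bounds of a = x :: a'
          cases x
          · -- step false: new state (S.1, sbMed S); R-part of fold ≤ sbMed S,
            -- contradicting h2 : sbMed S < R-part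
            have hle : leQ (a'.foldl sbStep (sbStep S false)).2 (sbMed S) := by
              have := hwithin.2
              obtain ⟨⟨aa, bb⟩, cc, dd⟩ := S
              simpa [sbStep, sbMed] using this
            unfold ltQ leQ at *
            omega
          · have hle : leQ (sbMed S) (a'.foldl sbStep (sbStep S true)).1 := by
              have := hwithin.1
              obtain ⟨⟨aa, bb⟩, cc, dd⟩ := S
              simpa [sbStep, sbMed] using this
            unfold ltQ leQ at *
            omega
      | cons y b' =>
          have hyx : y = x := by
            by_contra hne
            have hSy := sbInv_step hInv y
            have hbb := brS_bounds hSy b'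
            simp only [List.foldl_cons] at *
            have hp := sbInv_pos hInv
            clear ih hwt
            cases x <;> cases y <;> [skip; skip; skip; skip] <;>
              first
                | exact hne rfl
                | skip
            · -- x = false, y = true : med S <_Q br b, br b <_Q R(a) ≤_Q med S
              have hRle : leQ (a'.foldl sbStep (sbStep S false)).2 (sbMed S) := by
                have := hwithin.2
                obtain ⟨⟨aa, bb⟩, cc, dd⟩ := S
                simpa [sbStep, sbMed] using this
              have hmedlt : ltQ (sbMed S) (sbMed (b'.foldl sbStep (sbStep S true))) := by
                have := hbb.1
                obtain ⟨⟨aa, bb⟩, cc, dd⟩ := S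
                simpa [sbStep, sbMed] using this
              -- chain: med S < br b < F.2 ≤ med S
              have hFinv := sbInv_fold hS' a'
              have hFp := sbInv_pos hFinv
              set M := sbMed (b'.foldl sbStep (sbStep S true)) with hM
              set F := a'.foldl sbStep (sbStep S false) with hF
              clear hM hF hbb hwithin hS' hSy hInv h1
              obtain ⟨⟨aa, bb⟩, cc, dd⟩ := S
              obtain ⟨⟨e, f⟩, g, k⟩ := F
              obtain ⟨m1, m2⟩ := M
              simp only [ltQ, leQ, sbMed, sbInv] at *
              nlinarith
            · -- x = true, y = false
              have hLle : leQ (sbMed S) (a'.foldl sbStep (sbStep S true)).1 := by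
                have := hwithin.1
                obtain ⟨⟨aa, bb⟩, cc, dd⟩ := S
                simpa [sbStep, sbMed] using this
              have hmedlt : ltQ (sbMed (b'.foldl sbStep (sbStep S false))) (sbMed S) := by
                have := hbb.2
                obtain ⟨⟨aa, bb⟩, cc, dd⟩ := S
                simpa [sbStep, sbMed] using this
              have hFinv := sbInv_fold hS' a'
              have hFp := sbInv_pos hFinv
              set M := sbMed (b'.foldl sbStep (sbStep S false)) with hM
              set F := a'.foldl sbStep (sbStep S true) with hF
              clear hM hF hbb hwithin hS' hSy hInv h2
              obtain ⟨⟨aa, bb⟩, cc, dd⟩ := S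
              obtain ⟨⟨e, f⟩, g, k⟩ := F
              obtain ⟨m1, m2⟩ := M
              simp only [ltQ, leQ, sbMed, sbInv] at *
              nlinarith
          subst hyx
          simp only [List.foldl_cons] at *
          rw [ih (sbStep S y) b' hS' hwt h1 h2]

/-- If `|StBr(b)| ≤ |StBr(a)|`, `L(a) <_Q StBr(b)` and `StBr(b) <_Q R(a)`,
then `b = a`. -/
theorem sternBrocot_eq_of_between (a b : List Bool)
    (hwt : wtQ (stBr b) ≤ wtQ (stBr a))
    (h1 : ltQ (sbL a) (stBr b))
    (h2 : ltQ (stBr b) (sbR a)) :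
    b = a := by
  have hInv : sbInv (((0, 1), (1, 0)) : (ℕ × ℕ) × (ℕ × ℕ)) := by simp [sbInv]
  have hb : stBr b = sbMed (b.foldl sbStep ((0, 1), (1, 0))) := rfl
  have ha : stBr a = sbMed (a.foldl sbStep ((0, 1), (1, 0))) := rfl
  exact sb_gen a ((0, 1), (1, 0)) b hInv (by rw [← hb, ← ha]; exact hwt)
    (by rw [← hb]; exact h1) (by rw [← hb]; exact h2)
end

section
/- Every node of the Stern–Brocot tree is uniquely determined by its two godfathers: if finite Boolean lists w and w' have the same left godfather and the same right godfather (as elements of the set consisting of all paths together with the two ghosts ∂ℓ and ∂r), then w = w'. -/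
/-- The left godfather of a path `w`: delete the final (possibly empty) block of
`false` entries together with the preceding `true` entry; if `w` contains no
`true` entry the left godfather is the ghost `∂ℓ`, encoded as `none`. -/
def lgf (w : List Bool) : Option (List Bool) :=
  match w.reverse.dropWhile (fun b => !b) with
  | true :: rest => some rest.reverse
  | _ => none

/-- The right godfather of a path `w`: delete the final (possibly empty) block
of `true` entries together with the preceding `false` entry; if `w` contains no
`false` entry the right godfather is the ghost `∂r`, encoded as `none`. -/
def rgf (w : List Bool) : Option (List Bool) :=
  match w.reverse.dropWhile (fun b => b) with
  | false :: rest => some rest.reverse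
  | _ => none

/-- Left godfather, on reversed paths. -/
def lgf' (v : List Bool) : Option (List Bool) :=
  match v.dropWhile (fun b => !b) with
  | true :: rest => some rest
  | _ => none

/-- Right godfather, on reversed paths. -/
def rgf' (v : List Bool) : Option (List Bool) :=
  match v.dropWhile (fun b => b) with
  | false :: rest => some rest
  | _ => none

lemma lgf_eq (w : List Bool) : lgf w = (lgf' w.reverse).map List.reverse := by
  unfold lgf lgf'
  rcases h : w.reverse.dropWhile (fun b => !b) with _ | ⟨b, rest⟩
  · simp
  · cases b <;> simp

lemma rgf_eq (w : List Bool) : rgf w = (rgf' w.reverse).map List.reverse := by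
  unfold rgf rgf'
  rcases h : w.reverse.dropWhile (fun b => b) with _ | ⟨b, rest⟩
  · simp
  · cases b <;> simp

lemma lgf'_lt {v y : List Bool} (h : lgf' v = some y) : y.length < v.length := by
  unfold lgf' at h
  rcases h' : v.dropWhile (fun b => !b) with _ | ⟨b, rest⟩ <;> rw [h'] at h
  · simp at h
  · cases b
    · simp at h
    · simp only [Option.some.injEq] at h
      subst h
      have := (List.dropWhile_suffix (l := v) (fun b => !b)).length_le
      rw [h'] at this
      simp at this
      omega

lemma rgf'_lt {v y : List Bool} (h : rgf' v = some y) : y.length < v.length := by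
  unfold rgf' at h
  rcases h' : v.dropWhile (fun b => b) with _ | ⟨b, rest⟩ <;> rw [h'] at h
  · simp at h
  · cases b
    · simp only [Option.some.injEq] at h
      subst h
      have := (List.dropWhile_suffix (l := v) (fun b => b)).length_le
      rw [h'] at this
      simp at this
      omega
    · simp at h

lemma lgf'_false (t : List Bool) : lgf' (false :: t) = lgf' t := by
  simp [lgf', List.dropWhile]

lemma lgf'_true (t : List Bool) : lgf' (true :: t) = some t := by
  simp [lgf', List.dropWhile]

lemma rgf'_true (t : List Bool) : rgf' (true :: t) = rgf' t := by
  simp [rgf', List.dropWhile]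

lemma rgf'_false (t : List Bool) : rgf' (false :: t) = some t := by
  simp [rgf', List.dropWhile]

/-- Reconstruct a reversed path from its two godfathers. -/
def recon : Option (List Bool) → Option (List Bool) → List Bool
  | none, none => []
  | none, some x => false :: x
  | some y, none => true :: y
  | some y, some x => if y.length < x.length then false :: x else true :: y

lemma recon_eq (v : List Bool) : recon (lgf' v) (rgf' v) = v := by
  cases v with
  | nil => rfl
  | cons b t =>
    cases b
    · rw [lgf'_false, rgf'_false]
      rcases h : lgf' t with _ | y
      · rfl
      · have := lgf'_lt h
        simp [recon, this]
    · rw [lgf'_true, rgf'_true]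
      rcases h : rgf' t with _ | x
      · rfl
      · have := rgf'_lt h
        simp [recon, Nat.not_lt.mpr (Nat.le_of_lt this)]

/-- Every node of the Stern–Brocot tree is uniquely determined by its two
godfathers: if `w` and `w'` have the same left godfather and the same right
godfather, then `w = w'`. -/
theorem sternBrocot_godfathers_determine (w w' : List Bool)
    (hl : lgf w = lgf w') (hr : rgf w = rgf w') : w = w' := by
  rw [lgf_eq, lgf_eq] at hl
  rw [rgf_eq, rgf_eq] at hr
  have hinj : Function.Injective (Option.map (List.reverse : List Bool → List Bool)) :=
    Option.map_injective (fun a b h => by simpa using congrArg List.reverse h)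
  have hl' := hinj hl
  have hr' := hinj hr
  have : w.reverse = w'.reverse := by
    rw [← recon_eq w.reverse, ← recon_eq w'.reverse, hl', hr']
  simpa using congrArg List.reverse this
end

section
/- For every finite Boolean list w, the words ℓ(w), r(w) and γ(w) = ℓ(w)·r(w) are Lyndon words with ℓ(w) < r(w), and γ(w) = ℓ(w)·r(w) is the Shirshow decomposition of γ(w): for every factorization γ(w) = v·v' into two nonempty Lyndon words, the length of ℓ(w) is at most the length of v. -/
/-- One step of the word state-passing recursion over the alphabet
`{a, b}` (encoded as `a = false`, `b = true`): the state is the pair `(ℓ, r)`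
of word bounds; a `false` step replaces `r` by the concatenation `ℓ ++ r`,
a `true` step replaces `ℓ` by `ℓ ++ r`. -/
def wStep : (List Bool × List Bool) → Bool → (List Bool × List Bool)
  | (l, r), false => (l, l ++ r)
  | (l, r), true  => (l ++ r, r)

/-- The word bounds `(ℓ(w), r(w))` of the path `w`, starting from
`(a, b) = ([false], [true])` at the empty path. -/
def wBounds (w : List Bool) : List Bool × List Bool :=
  w.foldl wStep ([false], [true])

/-- The left word bound `ℓ(w)`. -/
def lWord (w : List Bool) : List Bool := (wBounds w).1

/-- The right word bound `r(w)`. -/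
def rWord (w : List Bool) : List Bool := (wBounds w).2

/-- The word `γ(w) := ℓ(w) ++ r(w)` attached to a path `w`. -/
def gammaWord (w : List Bool) : List Bool := lWord w ++ rWord w

/-- The strict lexicographic order on words over the two-letter alphabet
`{a, b}` with `a = false < b = true`: `u < v` iff `v = u ++ t` for a nonempty
`t`, or `u` and `v` first differ with an `a` in `u` against a `b` in `v`. -/
def WordLt (u v : List Bool) : Prop := List.Lex (· < ·) u v

/-- A nonempty word `u` is Lyndon iff `v ++ t < t ++ v` (lexicographically)
for every factorization `u = v ++ t` into nonempty words. -/
def IsLyndon (u : List Bool) : Prop :=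
  u ≠ [] ∧ ∀ v t : List Bool, v ≠ [] → t ≠ [] → u = v ++ t →
    WordLt (v ++ t) (t ++ v)

namespace List

variable {α : Type*} {u v x : List α}

theorem singleton_ne_append {a : α} (hu : u ≠ []) (hv : v ≠ []) : [a] ≠ u ++ v := by
  simp [eq_comm (a := [a]), append_eq_singleton_iff, hu, hv]

variable [LinearOrder α]

theorem lt_append_of_ne_nil (u : List α) (hx : x ≠ []) : u < u ++ x := by
  obtain ⟨a, x, rfl⟩ := exists_cons_of_ne_nil hx
  simpa using append_left_lt (l₁ := u) (nil_lt_cons a x)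

theorem lt_append_of_le (h : u ≤ v) (hx : x ≠ []) : u < v ++ x := by
  rcases h.lt_or_eq with h | rfl
  · exact Lex.append_right _ _ h
  · exact lt_append_of_ne_nil u hx

theorem append_lt_append_left_iff {y : List α} : u ++ x < u ++ y ↔ x < y :=
  StrictMono.lt_iff_lt (f := (u ++ ·)) fun _ _ h => append_left_lt h

theorem isPrefix_or_forall_append_lt_append (h : u < v) :
    u <+: v ∨ ∀ x y : List α, u ++ x < v ++ y := by
  induction (show Lex (· < ·) u v from h) with
  | nil => exact .inl (nil_prefix)
  | rel hab => exact .inr fun _ _ => .rel hab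
  | cons _ ih =>
    rcases ih ‹_› with hp | hxy
    · exact .inl (cons_prefix_cons.mpr ⟨rfl, hp⟩)
    · exact .inr fun x y => .cons (hxy x y)

theorem append_lt_append_of_lt_of_length_le (h : u < v) (hl : v.length ≤ u.length)
    (x y : List α) : u ++ x < v ++ y :=
  (isPrefix_or_forall_append_lt_append h).resolve_left
    (fun hp => h.ne (hp.eq_of_length (le_antisymm hp.length_le hl))) x y

end List

open List

section Lyndon

variable {α : Type*} [LinearOrder α]

structure IsSuffixLyndon (u : List α) : Prop where
  ne_nil : u ≠ []
  lt_suffix : ∀ v t : List α, v ≠ [] → t ≠ [] → u = v ++ t → u < t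

theorem isSuffixLyndon_singleton (a : α) : IsSuffixLyndon [a] :=
  ⟨cons_ne_nil a [], fun _ _ hv ht h => absurd h (singleton_ne_append hv ht)⟩

theorem IsSuffixLyndon.append_lt {u v : List α} (hv : IsSuffixLyndon v) (hu : u ≠ [])
    (huv : u < v) : u ++ v < v := by
  rcases isPrefix_or_forall_append_lt_append huv with ⟨s, rfl⟩ | hxy
  · have hs : s ≠ [] := by rintro rfl; simp at huv
    exact append_left_lt (hv.lt_suffix u s hu hs rfl)
  · simpa using hxy v []

theorem IsSuffixLyndon.append {u v : List α} (hu : IsSuffixLyndon u) (hv : IsSuffixLyndon v)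
    (huv : u < v) : IsSuffixLyndon (u ++ v) := by
  have huvv := hv.append_lt hu.ne_nil huv
  refine ⟨by simp [hu.ne_nil], fun p t hp ht heq => ?_⟩
  rcases append_eq_append_iff.mp heq with ⟨w, rfl, hw⟩ | ⟨w, hw, rfl⟩
  · rcases eq_or_ne w [] with rfl | hw'
    · obtain rfl : v = t := hw
      exact huvv
    · exact huvv.trans (hv.lt_suffix w t hw' ht hw)
  · rcases eq_or_ne w [] with rfl | hw'
    · simpa using huvv
    · have hlen : w.length ≤ u.length := by simp [hw]
      exact append_lt_append_of_lt_of_length_le (hu.lt_suffix p w hp hw' hw) hlen v v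

/-- Shirshov's standard pairs, with the condition `r ≤ l''` on the standard factorization
`l = l' ++ l''` replaced by the equivalent condition on all proper suffixes of `l`. -/
structure IsStandardPair (l r : List α) : Prop where
  left : IsSuffixLyndon l
  right : IsSuffixLyndon r
  lt : l < r
  le_suffix : ∀ v t : List α, v ≠ [] → t ≠ [] → l = v ++ t → r ≤ t

namespace IsStandardPair

variable {l r : List α}

theorem singleton {a b : α} (hab : a < b) : IsStandardPair [a] [b] :=
  ⟨isSuffixLyndon_singleton a, isSuffixLyndon_singleton b, .rel hab,
    fun _ _ hv ht h => absurd h (singleton_ne_append hv ht)⟩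

theorem left_append (h : IsStandardPair l r) : IsStandardPair l (l ++ r) := by
  obtain ⟨hl, hr, hlr, -⟩ := h
  refine ⟨hl, hl.append hr hlr, lt_append_of_ne_nil l hr.ne_nil, fun v t hv ht heq => ?_⟩
  have hlen : t.length ≤ l.length := by simp [heq]
  simpa using (append_lt_append_of_lt_of_length_le (hl.lt_suffix v t hv ht heq) hlen r []).le

theorem append_right (h : IsStandardPair l r) : IsStandardPair (l ++ r) r := by
  obtain ⟨hl, hr, hlr, hsuf⟩ := h
  refine ⟨hl.append hr hlr, hr, hr.append_lt hl.ne_nil hlr, fun v t hv ht heq => ?_⟩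
  rcases append_eq_append_iff.mp heq with ⟨w, -, hrw⟩ | ⟨w, hlw, rfl⟩
  · rcases eq_or_ne w [] with rfl | hw
    · exact (show r = t from hrw).le
    · exact (hr.lt_suffix w t hw ht hrw).le
  · rcases eq_or_ne w [] with rfl | hw
    · exact le_rfl
    · exact (lt_append_of_le (hsuf v w hv hw hlw) hr.ne_nil).le

theorem length_le_of_append_eq (h : IsStandardPair l r) {v v' : List α} (hv : v ≠ [])
    (hv' : IsSuffixLyndon v') (heq : l ++ r = v ++ v') : l.length ≤ v.length := by
  rcases append_eq_append_iff.mp heq with ⟨s, rfl, -⟩ | ⟨s, hls, rfl⟩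
  · simp
  · rcases eq_or_ne s [] with rfl | hs
    · simp [hls]
    · have hr : r < s ++ r := lt_append_of_le (h.le_suffix v s hv hs hls) h.right.ne_nil
      exact absurd (hv'.lt_suffix s r hs h.right.ne_nil rfl) hr.asymm

end IsStandardPair

end Lyndon

theorem IsLyndon.ne_append_of_eq_append {u v t w : List Bool} (h : IsLyndon u) (hv : v ≠ [])
    (ht : t ≠ []) (hw : w ≠ []) (hu : u = v ++ t) : u ≠ t ++ w := by
  intro hu'
  have hvt : v ++ t < t ++ v := h.2 v t hv ht hu
  have htw : t ++ w < w ++ t := h.2 t w ht hw hu'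
  rw [← hu, hu'] at hvt
  rw [← hu', hu] at htw
  have hlen : v.length ≤ w.length := by
    have := congrArg length (hu.symm.trans hu')
    simp only [length_append] at this
    omega
  exact htw.asymm (append_lt_append_of_lt_of_length_le (append_lt_append_left_iff.mp hvt) hlen t t)

theorem isLyndon_iff_isSuffixLyndon (u : List Bool) : IsLyndon u ↔ IsSuffixLyndon u := by
  refine ⟨fun h => ⟨h.1, fun v t hv ht hu => ?_⟩, fun h => ⟨h.ne_nil, fun v t hv ht hu => ?_⟩⟩
  · have hlen : t.length < u.length := by simp [hu, length_pos_iff.mpr hv]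
    -- since `u < t ++ v`, a suffix `t ≤ u` would have to be a border of `u`
    refine lt_of_not_ge fun htu => ?_
    rcases isPrefix_or_forall_append_lt_append (htu.lt_of_ne (by rintro rfl; simp at hlen))
      with ⟨w, hw⟩ | hlt
    · have hw' : w ≠ [] := by rintro rfl; simp [← hw] at hlen
      exact h.ne_append_of_eq_append hv ht hw' hu hw.symm
    · have hvt : u < t ++ v := hu ▸ h.2 v t hv ht hu
      exact hvt.asymm (by simpa using hlt v [])
  · have hlen : t.length ≤ u.length := by simp [hu]
    show v ++ t < t ++ v
    simpa [← hu] using append_lt_append_of_lt_of_length_le (h.lt_suffix v t hv ht hu) hlen [] v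

theorem isStandardPair_wStep {l r : List Bool} (h : IsStandardPair l r) (b : Bool) :
    IsStandardPair (wStep (l, r) b).1 (wStep (l, r) b).2 := by
  cases b
  exacts [h.left_append, h.append_right]

theorem isStandardPair_foldl_wStep (w : List Bool) {p : List Bool × List Bool}
    (h : IsStandardPair p.1 p.2) : IsStandardPair (w.foldl wStep p).1 (w.foldl wStep p).2 := by
  induction w generalizing p with
  | nil => exact h
  | cons b w ih => exact ih (isStandardPair_wStep h b)

theorem isStandardPair_lWord_rWord (w : List Bool) : IsStandardPair (lWord w) (rWord w) :=
  isStandardPair_foldl_wStep w (.singleton Bool.false_lt_true)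

/-- For every path `w`: the words `ℓ(w)`, `r(w)` and `γ(w) = ℓ(w) ++ r(w)` are
Lyndon, `ℓ(w) < r(w)`, and `γ(w) = ℓ(w) ++ r(w)` is the Shirshow decomposition
of `γ(w)`: for every factorization `γ(w) = v ++ v'` into two nonempty Lyndon
words, the length of `ℓ(w)` is at most the length of `v`. -/
theorem gammaWord_lyndon_shirshow (w : List Bool) :
    IsLyndon (lWord w) ∧ IsLyndon (rWord w) ∧ IsLyndon (gammaWord w) ∧
    WordLt (lWord w) (rWord w) ∧
    ∀ v v' : List Bool, v ≠ [] → v' ≠ [] → IsLyndon v → IsLyndon v' →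
      gammaWord w = v ++ v' → (lWord w).length ≤ v.length := by
  have h := isStandardPair_lWord_rWord w
  simp only [isLyndon_iff_isSuffixLyndon]
  exact ⟨h.left, h.right, h.left.append h.right h.lt, h.lt,
    fun v v' hv _ _ hv' => h.length_le_of_append_eq hv hv'⟩
end

section
/- Extend γ to the two ghosts by γ(∂ℓ) := a, γ(∂r) := b, and the Stern–Brocot pairs by pair(∂ℓ) := (0,1), pair(∂r) := (1,0), pair(w) := StBr(w) for a path w. Then for any two elements x, y of the set consisting of all finite Boolean lists together with ∂ℓ and ∂r, the word γ(x) is lexicographically smaller than γ(y) if and only if pair(x) <_Q pair(y). -/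
/-- The set of paths together with the two ghosts: `Sum.inl false = ∂ℓ`,
`Sum.inl true = ∂r`, `Sum.inr w` a path `w`. -/
abbrev NodeBar := Bool ⊕ List Bool

/-- `γ` extended to the ghosts: `γ(∂ℓ) = a`, `γ(∂r) = b`. -/
def gammaBar : NodeBar → List Bool
  | .inl false => [false]
  | .inl true  => [true]
  | .inr w     => gammaWord w

/-- The Stern–Brocot pair extended to the ghosts:
`pair(∂ℓ) = (0,1)`, `pair(∂r) = (1,0)`. -/
def pairBar : NodeBar → ℕ × ℕ
  | .inl false => (0, 1)
  | .inl true  => (1, 0)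
  | .inr w     => stBr w

/-!
Both the Stern–Brocot pairs and the words `γ` come out of one recursion: a node is the mediant
`m L R` of its bounds, and its children have bounds `(L, m L R)` and `(m L R, R)`, with `m` the
componentwise sum resp. concatenation. If, for a transitive relation `<`, every node lies strictly
between its own bounds, the labelling is strictly increasing along the in-order traversal of the
tree, with the root's bounds `∂ℓ`, `∂r` at both ends. For pairs this holds because
`R₁ L₂ = L₁ R₂ + 1`; for words because `ℓ r < r` (so `r ≠ []` and `ℓ < ℓ r`), which passes to the
children as `ℓ (ℓ r) < ℓ r` and `(ℓ r) r < r`. Two asymmetric relations pulled back along maps that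
are both strictly increasing for the same trichotomous order then agree.
-/

theorem rel_iff_rel_of_trichotomous {α β γ : Type*} {r : α → α → Prop} [Std.Trichotomous r]
    {s : β → β → Prop} [Std.Asymm s] {t : γ → γ → Prop} [Std.Asymm t] {f : α → β} {g : α → γ}
    (hf : ∀ ⦃x y⦄, r x y → s (f x) (f y)) (hg : ∀ ⦃x y⦄, r x y → t (g x) (g y)) (x y : α) :
    s (f x) (f y) ↔ t (g x) (g y) := by
  rcases trichotomous_of r x y with h | rfl | h
  · exact iff_of_true (hf h) (hg h)
  · exact iff_of_false (irrefl _) (irrefl _)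
  · exact iff_of_false (asymm (hf h)) (asymm (hg h))

theorem List.append_lt_of_lt_of_length_le {α : Type*} [LT α] {u v : List α} (h : u < v)
    (hl : v.length ≤ u.length) (t : List α) : u ++ t < v := by
  induction h with
  | nil => simp at hl
  | cons _ ih => exact List.Lex.cons (ih (by simpa using hl))
  | rel h => exact List.Lex.rel h

/-- The in-order (symmetric-order) traversal of the infinite binary tree: left subtree, node,
right subtree. -/
def PathLt : List Bool → List Bool → Prop
  | [], [] => False
  | [], b :: _ => b = true
  | a :: _, [] => a = false
  | a :: u, b :: v => a < b ∨ a = b ∧ PathLt u v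

theorem pathLt_trichotomous : ∀ u v : List Bool, PathLt u v ∨ u = v ∨ PathLt v u
  | [], [] => by simp
  | [], b :: _ => by cases b <;> simp [PathLt]
  | a :: _, [] => by cases a <;> simp [PathLt]
  | a :: u, b :: v => by
    rcases pathLt_trichotomous u v with h | rfl | h <;> cases a <;> cases b <;> simp [PathLt, *]

def InorderLt : NodeBar → NodeBar → Prop
  | .inl a, .inl b => a < b
  | .inl a, .inr _ => a = false
  | .inr _, .inl b => b = true
  | .inr u, .inr v => PathLt u v

instance : Std.Trichotomous InorderLt where
  trichotomous x y hxy hyx := by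
    rcases x with a | u <;> rcases y with b | v
    · cases a <;> cases b <;> simp_all [InorderLt]
    · cases a <;> simp_all [InorderLt]
    · cases b <;> simp_all [InorderLt]
    · rcases pathLt_trichotomous u v with h | rfl | h
      exacts [(hxy h).elim, rfl, (hyx h).elim]

section Mediant

variable {β : Type*} (m : β → β → β) (s₀ : β × β)

def mediantStep (s : β × β) : Bool → β × β
  | false => (s.1, m s.1 s.2)
  | true => (m s.1 s.2, s.2)

def mediantBounds (w : List Bool) : β × β := w.foldl (mediantStep m) s₀

def mediantNode (w : List Bool) : β := m (mediantBounds m s₀ w).1 (mediantBounds m s₀ w).2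

def mediantNodeBar : NodeBar → β
  | .inl false => s₀.1
  | .inl true => s₀.2
  | .inr w => mediantNode m s₀ w

theorem mediantBounds_induction {P : β × β → Prop} (h₀ : P s₀)
    (hstep : ∀ s c, P s → P (mediantStep m s c)) (w : List Bool) : P (mediantBounds m s₀ w) := by
  induction w generalizing s₀ with
  | nil => exact h₀
  | cons c w ih => exact ih _ (hstep _ c h₀)

@[simp]
theorem mediantBounds_nil : mediantBounds m s₀ [] = s₀ := rfl

@[simp]
theorem mediantBounds_append_false (w : List Bool) :
    mediantBounds m s₀ (w ++ [false]) = ((mediantBounds m s₀ w).1, mediantNode m s₀ w) := by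
  simp [mediantBounds, mediantNode, mediantStep]

@[simp]
theorem mediantBounds_append_true (w : List Bool) :
    mediantBounds m s₀ (w ++ [true]) = (mediantNode m s₀ w, (mediantBounds m s₀ w).2) := by
  simp [mediantBounds, mediantNode, mediantStep]

def NodesBetweenBounds (lt : β → β → Prop) : Prop :=
  ∀ w, lt (mediantBounds m s₀ w).1 (mediantNode m s₀ w) ∧
    lt (mediantNode m s₀ w) (mediantBounds m s₀ w).2

variable {lt : β → β → Prop} [IsTrans β lt] {m s₀}

theorem mediantNode_append_mem_bounds (hnode : NodesBetweenBounds m s₀ lt) (w u : List Bool) :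
    lt (mediantBounds m s₀ w).1 (mediantNode m s₀ (w ++ u)) ∧
      lt (mediantNode m s₀ (w ++ u)) (mediantBounds m s₀ w).2 := by
  induction u generalizing w with
  | nil => simpa using hnode w
  | cons c u ih =>
    obtain ⟨hl, hr⟩ := hnode w
    have := ih (w ++ [c])
    rw [List.append_assoc, List.singleton_append] at this
    cases c <;> simp only [mediantBounds_append_false, mediantBounds_append_true] at this
    · exact ⟨this.1, _root_.trans this.2 hr⟩
    · exact ⟨_root_.trans hl this.1, this.2⟩

theorem mediantNode_append_false_lt (hnode : NodesBetweenBounds m s₀ lt) (w u : List Bool) :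
    lt (mediantNode m s₀ (w ++ false :: u)) (mediantNode m s₀ w) := by
  simpa using (mediantNode_append_mem_bounds hnode (w ++ [false]) u).2

theorem mediantNode_lt_append_true (hnode : NodesBetweenBounds m s₀ lt) (w u : List Bool) :
    lt (mediantNode m s₀ w) (mediantNode m s₀ (w ++ true :: u)) := by
  simpa using (mediantNode_append_mem_bounds hnode (w ++ [true]) u).1

theorem mediantNode_append_lt_of_pathLt (hnode : NodesBetweenBounds m s₀ lt) (p : List Bool)
    {u v : List Bool} (h : PathLt u v) :
    lt (mediantNode m s₀ (p ++ u)) (mediantNode m s₀ (p ++ v)) := by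
  induction u generalizing p v with
  | nil =>
    cases v with
    | nil => exact h.elim
    | cons b v => subst h; simpa using mediantNode_lt_append_true hnode p v
  | cons a u ih =>
    cases v with
    | nil => obtain rfl : a = false := h; simpa using mediantNode_append_false_lt hnode p u
    | cons b v =>
      obtain h | ⟨rfl, h⟩ := h
      · obtain ⟨rfl, rfl⟩ : a = false ∧ b = true := by decide +revert
        exact _root_.trans (mediantNode_append_false_lt hnode p u)
          (mediantNode_lt_append_true hnode p v)
      · simpa using ih (p ++ [a]) h

theorem mediantNodeBar_lt_of_inorderLt (hnode : NodesBetweenBounds m s₀ lt)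
    ⦃x y : NodeBar⦄ (h : InorderLt x y) :
    lt (mediantNodeBar m s₀ x) (mediantNodeBar m s₀ y) := by
  rcases x with a | u <;> rcases y with b | v
  · obtain ⟨rfl, rfl⟩ : a = false ∧ b = true := by change a < b at h; decide +revert
    exact _root_.trans (hnode []).1 (hnode []).2
  · obtain rfl : a = false := h
    simpa [mediantNodeBar] using (mediantNode_append_mem_bounds hnode [] v).1
  · obtain rfl : b = true := h
    simpa [mediantNodeBar] using (mediantNode_append_mem_bounds hnode [] u).2
  · simpa [mediantNodeBar] using mediantNode_append_lt_of_pathLt hnode [] h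

end Mediant

instance : IsTrans (ℕ × ℕ) ltQ where
  trans p q r hpq hqr := by
    unfold ltQ at *
    have hp : 0 < p.2 := Nat.pos_of_ne_zero fun h => by simp [h] at hpq
    have hq : 0 < q.2 := Nat.pos_of_ne_zero fun h => by simp [h] at hqr
    refine Nat.lt_of_mul_lt_mul_left (a := q.2) ?_
    nlinarith [Nat.mul_le_mul_right r.2 hpq.le, Nat.mul_lt_mul_of_pos_right hqr hp]

instance : Std.Asymm ltQ where
  asymm p q hpq hqp := by unfold ltQ at *; omega

instance : IsTrans (List Bool) WordLt := ⟨fun _ _ _ h h' => lt_trans (α := List Bool) h h'⟩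

instance : Std.Asymm WordLt :=
  ⟨fun _ _ h => asymm (r := (· < · : List Bool → List Bool → Prop)) h⟩

theorem sbBounds_eq_mediantBounds : sbBounds = mediantBounds (· + ·) ((0, 1), (1, 0)) := by
  have : sbStep = mediantStep (· + ·) := by
    funext s c; cases c <;> rfl
  funext w; rw [sbBounds, this]; rfl

theorem pairBar_eq_mediantNodeBar : pairBar = mediantNodeBar (· + ·) ((0, 1), (1, 0)) := by
  funext x
  rcases x with (_ | _) | w
  · rfl
  · rfl
  · simp only [pairBar, stBr, sbL, sbR, sbBounds_eq_mediantBounds]; rfl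

theorem wBounds_eq_mediantBounds : wBounds = mediantBounds (· ++ ·) ([false], [true]) := by
  have : wStep = mediantStep (· ++ ·) := by
    funext s c; cases c <;> rfl
  funext w; rw [wBounds, this]; rfl

theorem gammaBar_eq_mediantNodeBar : gammaBar = mediantNodeBar (· ++ ·) ([false], [true]) := by
  funext x
  rcases x with (_ | _) | w
  · rfl
  · rfl
  · simp only [gammaBar, gammaWord, lWord, rWord, wBounds_eq_mediantBounds]; rfl

theorem nodesBetweenBounds_sb : NodesBetweenBounds (· + ·) ((0, 1), (1, 0)) ltQ := by
  intro w
  have hdet := sbR_fst_mul_sbL_snd w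
  simp only [sbL, sbR, sbBounds_eq_mediantBounds] at hdet
  simp only [ltQ, mediantNode, Prod.fst_add, Prod.snd_add]
  constructor <;> nlinarith

theorem gammaWord_lt_rWord (w : List Bool) : WordLt (gammaWord w) (rWord w) := by
  simp only [gammaWord, lWord, rWord, wBounds_eq_mediantBounds]
  refine mediantBounds_induction _ ([false], [true]) (P := fun s => WordLt (s.1 ++ s.2) s.2)
    (List.Lex.rel (by decide)) ?_ w
  rintro ⟨l, r⟩ (_ | _) h
  · exact List.append_left_lt h
  · exact List.append_lt_of_lt_of_length_le h (by simp) r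

theorem nodesBetweenBounds_word : NodesBetweenBounds (· ++ ·) ([false], [true]) WordLt := by
  intro w
  have hr := gammaWord_lt_rWord w
  simp only [gammaWord, lWord, rWord, wBounds_eq_mediantBounds] at hr
  simp only [mediantNode]
  generalize mediantBounds (· ++ ·) ([false], [true]) w = s at hr ⊢
  obtain ⟨l, _ | ⟨b, r⟩⟩ := s
  · exact absurd hr List.not_lex_nil
  · exact ⟨by simpa [WordLt] using List.append_left_lt (l₁ := l) (List.nil_lt_cons b r), hr⟩

/-- For any two elements `x, y` of the set of all paths together with the
ghosts `∂ℓ` and `∂r`, `γ(x)` is lexicographically smaller than `γ(y)` if and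
only if `pair(x) <_Q pair(y)`. -/
theorem gammaBar_lt_iff_ltQ (x y : NodeBar) :
    WordLt (gammaBar x) (gammaBar y) ↔ ltQ (pairBar x) (pairBar y) := by
  rw [gammaBar_eq_mediantNodeBar, pairBar_eq_mediantNodeBar]
  exact rel_iff_rel_of_trichotomous (r := InorderLt)
    (mediantNodeBar_lt_of_inorderLt nodesBetweenBounds_word)
    (mediantNodeBar_lt_of_inorderLt nodesBetweenBounds_sb) x y
end

section
/- Let g, α ∈ ℤ², p := χ(α,α)⁻¹, and λ₀ ∈ k. Define μ : ℕ → k by μ(0) := λ₀ + χ(g,α)⁻¹ − χ(α,g) and μ(j+1) := μ(j) + χ(g+(j+1)α, α)⁻¹ − χ(α, g+(j+1)α). Then for every m ∈ ℕ: μ(m) = λ₀ + (χ(g,α)⁻¹ − χ(α, g+m·α))·[m+1]_p. (This is the formula λ(b) = λ(a) + (χ(lgf a, a)⁻¹ − χ(a, lgf b))·[lgfl(b)]_{p_a} for the right-child chain below the left child of a node a with left godfather of degree g and degree α.) -/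
open scoped BigOperators

/-- The q-number `[n]_q := 1 + q + ⋯ + q^{n−1}`. -/
def qNum {k : Type*} [Semiring k] (q : k) (n : ℕ) : k :=
  ∑ i ∈ Finset.range n, q ^ i

lemma qNum_geom_aux {k : Type*} [Field k] (c : k) (hc : c ≠ 0) (m : ℕ) :
    c ^ m * qNum c⁻¹ (m + 1) = qNum c (m + 1) := by
  unfold qNum
  rw [Finset.mul_sum, ← Finset.sum_range_reflect (fun i => c ^ i) (m + 1)]
  apply Finset.sum_congr rfl
  intro i hi
  rw [Finset.mem_range] at hi
  rw [inv_pow, ← pow_sub₀ c hc (by omega : i ≤ m)]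
  congr 1

lemma step_aux {k : Type*} [Field k] (a b c : k) (ha : a ≠ 0) (hc : c ≠ 0) (n : ℕ) :
    (a⁻¹ - b * c ^ n) * qNum c⁻¹ (n + 1) + (a * c ^ (n + 1))⁻¹ - b * c ^ (n + 1)
      = (a⁻¹ - b * c ^ (n + 1)) * qNum c⁻¹ (n + 2) := by
  have h1 : c ^ n * qNum c⁻¹ (n + 1) = qNum c (n + 1) := qNum_geom_aux c hc n
  have h2 : qNum c (n + 1) * (c - 1) = c ^ (n + 1) - 1 := geom_sum_mul c (n + 1)
  have h3 : c ^ (n + 1) * (c⁻¹) ^ (n + 1) = 1 := by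
    rw [inv_pow, mul_inv_cancel₀ (pow_ne_zero _ hc)]
  have h4 : (a * c ^ (n + 1))⁻¹ = a⁻¹ * (c⁻¹) ^ (n + 1) := by
    rw [mul_inv, inv_pow]
  have h5 : qNum c⁻¹ (n + 2) = qNum c⁻¹ (n + 1) + (c⁻¹) ^ (n + 1) := by
    unfold qNum; rw [Finset.sum_range_succ]
  rw [h4, h5]
  linear_combination b * (c - 1) * h1 + b * h2 + b * h3

/-- Let `χ : ℤ² × ℤ² → kˣ` be a bicharacter, `g, α ∈ ℤ²`, `p := χ(α,α)⁻¹` and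
`λ₀ ∈ k`. If `μ : ℕ → k` satisfies `μ(0) = λ₀ + χ(g,α)⁻¹ − χ(α,g)` and
`μ(j+1) = μ(j) + χ(g+(j+1)α, α)⁻¹ − χ(α, g+(j+1)α)`, then for every `m`,
`μ(m) = λ₀ + (χ(g,α)⁻¹ − χ(α, g+m·α))·[m+1]_p`. -/
theorem lambda_right_chain_formula
    (k : Type*) [Field k]
    (χ : ℤ × ℤ → ℤ × ℤ → kˣ)
    (hχ₁ : ∀ x y z : ℤ × ℤ, χ (x + y) z = χ x z * χ y z)
    (hχ₂ : ∀ x y z : ℤ × ℤ, χ x (y + z) = χ x y * χ x z)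
    (g α : ℤ × ℤ) (lam₀ : k)
    (μ : ℕ → k)
    (hμ₀ : μ 0 = lam₀ + (χ g α : k)⁻¹ - (χ α g : k))
    (hμ : ∀ j : ℕ, μ (j + 1) =
      μ j + (χ (g + (j + 1) • α) α : k)⁻¹ - (χ α (g + (j + 1) • α) : k)) :
    ∀ m : ℕ, μ m = lam₀ +
      ((χ g α : k)⁻¹ - (χ α (g + m • α) : k)) * qNum ((χ α α : k)⁻¹) (m + 1) := by
  have h1 : ∀ j : ℕ, χ (g + j • α) α = χ g α * (χ α α) ^ j := by
    intro j
    induction j with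
    | zero => simp
    | succ n ih =>
      have h : g + (n + 1) • α = (g + n • α) + α := by
        rw [add_nsmul, one_nsmul, add_assoc]
      rw [h, hχ₁, ih, pow_succ, mul_assoc]
  have h2 : ∀ j : ℕ, χ α (g + j • α) = χ α g * (χ α α) ^ j := by
    intro j
    induction j with
    | zero => simp
    | succ n ih =>
      have h : g + (n + 1) • α = (g + n • α) + α := by
        rw [add_nsmul, one_nsmul, add_assoc]
      rw [h, hχ₂, ih, pow_succ, mul_assoc]
  intro m
  induction m with
  | zero =>
    simp only [zero_smul, add_zero, hμ₀]
    have h : qNum ((χ α α : k)⁻¹) 1 = 1 := by unfold qNum; simp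
    rw [h]; ring
  | succ n ih =>
    rw [hμ n, ih, h1 (n + 1), h2 (n + 1), h2 n]
    push_cast
    have hs := step_aux (χ g α : k) (χ α g : k) (χ α α : k)
      (Units.ne_zero _) (Units.ne_zero _) n
    linear_combination hs
end

section
/- Let f, α ∈ ℤ², p := χ(α,α)⁻¹, and λ₀ ∈ k. Define ν : ℕ → k by ν(0) := λ₀ + χ(α,f)⁻¹ − χ(f,α) and ν(j+1) := ν(j) + χ(α, f+(j+1)α)⁻¹ − χ(f+(j+1)α, α). Then for every m ∈ ℕ: ν(m) = λ₀ + (χ(α,f)⁻¹ − χ(f+m·α, α))·[m+1]_p. (This is the formula λ(c) = λ(a) + (χ(a, rgf a)⁻¹ − χ(rgf c, a))·[rgfl(c)]_{p_a} for the left-child chain below the right child of a node a with right godfather of degree f and degree α.) -/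
open scoped BigOperators

lemma qNum_succ {k : Type*} [Semiring k] (q : k) (n : ℕ) :
    qNum q (n + 1) = qNum q n + q ^ n := by
  simp [qNum, Finset.sum_range_succ]

lemma qNum_succ' {k : Type*} [CommSemiring k] (q : k) (n : ℕ) :
    qNum q (n + 1) = 1 + q * qNum q n := by
  simp [qNum, Finset.mul_sum, Finset.sum_range_succ', mul_comm, pow_succ, mul_assoc, add_comm]

/-- Let `χ : ℤ² × ℤ² → kˣ` be a bicharacter, `f, α ∈ ℤ²`, `p := χ(α,α)⁻¹` and
`λ₀ ∈ k`. If `ν : ℕ → k` satisfies `ν(0) = λ₀ + χ(α,f)⁻¹ − χ(f,α)` and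
`ν(j+1) = ν(j) + χ(α, f+(j+1)α)⁻¹ − χ(f+(j+1)α, α)`, then for every `m`,
`ν(m) = λ₀ + (χ(α,f)⁻¹ − χ(f+m·α, α))·[m+1]_p`. -/
theorem lambda_left_chain_formula
    (k : Type*) [Field k]
    (χ : ℤ × ℤ → ℤ × ℤ → kˣ)
    (hχ₁ : ∀ x y z : ℤ × ℤ, χ (x + y) z = χ x z * χ y z)
    (hχ₂ : ∀ x y z : ℤ × ℤ, χ x (y + z) = χ x y * χ x z)
    (f α : ℤ × ℤ) (lam₀ : k)
    (ν : ℕ → k)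
    (hν₀ : ν 0 = lam₀ + (χ α f : k)⁻¹ - (χ f α : k))
    (hν : ∀ j : ℕ, ν (j + 1) =
      ν j + (χ α (f + (j + 1) • α) : k)⁻¹ - (χ (f + (j + 1) • α) α : k)) :
    ∀ m : ℕ, ν m = lam₀ +
      ((χ α f : k)⁻¹ - (χ (f + m • α) α : k)) * qNum ((χ α α : k)⁻¹) (m + 1) := by
  set q : k := (χ α α : k) with hq
  set p : k := q⁻¹ with hp
  have hqp : q * p = 1 := by
    rw [hp, mul_inv_cancel₀ (Units.ne_zero _)]
  have cast1 : ∀ n : ℕ, (χ (f + n • α) α : k) = (χ f α : k) * q ^ n := by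
    intro n
    induction n with
    | zero => simp
    | succ n ih =>
      have h : f + (n + 1) • α = (f + n • α) + α := by
        rw [succ_nsmul, add_assoc]
      rw [h, hχ₁]
      push_cast
      rw [ih, pow_succ]
      ring
  have cast2 : ∀ n : ℕ, (χ α (f + n • α) : k) = (χ α f : k) * q ^ n := by
    intro n
    induction n with
    | zero => simp
    | succ n ih =>
      have h : f + (n + 1) • α = (f + n • α) + α := by
        rw [succ_nsmul, add_assoc]
      rw [h, hχ₂]
      push_cast
      rw [ih, pow_succ]
      ring
  have cast2' : ∀ n : ℕ, ((χ α (f + n • α) : k))⁻¹ = (χ α f : k)⁻¹ * p ^ n := by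
    intro n
    rw [cast2 n, mul_inv, hp, inv_pow]
  intro m
  induction m with
  | zero =>
    rw [hν₀]
    simp only [zero_smul, add_zero, qNum]
    simp [Finset.sum_range_one]
    ring
  | succ m ih =>
    have hstep := hν m
    rw [cast2' (m + 1), cast1 (m + 1)] at hstep
    rw [hstep, ih, cast1 m, cast1 (m + 1)]
    have h1 := qNum_succ' p (m + 1)
    have h2 := qNum_succ p (m + 1)
    have h3 : q ^ (m + 1) * p ^ (m + 1) = 1 := by
      rw [← mul_pow, hqp, one_pow]
    have h4 : q ^ (m + 1) * p = q ^ m := by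
      rw [pow_succ, mul_assoc, hqp, mul_one]
    linear_combination ((χ f α : k) * q ^ (m + 1)) * h1 - ((χ α f : k))⁻¹ * h2 +
      ((χ f α : k) * qNum p (m + 1)) * h4
end

section
/- Let g, f ∈ ℤ², α := g+f, and p := χ(α,α)⁻¹. Then for all integers m, l ≥ 1, the equality (χ(g,α)⁻¹ − χ(α,g)·p^{1−m})·[m]_p = (χ(α,f)⁻¹ − χ(f,α)·p^{1−l})·[l]_p holds if and only if [m+l]_p · (χ(f,f)⁻¹ − p^{m−l}·χ(g,g)⁻¹) = 0 in k. (Here p^{1−m}, p^{m−l} denote powers of the unit p with possibly negative integer exponents. This expresses, for a node a of degree α with godfathers of degrees g and f, that λ(b) = λ(c) for the two adjacent leaves b, c with rgf(b) = a, lgf(c) = a and lgfl(b) = m, rgfl(c) = l, if and only if [m+l]_{p_a}·(p_{rgf a} − p_a^{m−l}·p_{lgf a}) = 0.) -/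
open scoped BigOperators

lemma qNum_add {k : Type*} [CommSemiring k] (q : k) (a b : ℕ) :
    qNum q (a + b) = qNum q a + q ^ a * qNum q b := by
  induction b with
  | zero => simp [qNum]
  | succ n ih =>
      rw [← add_assoc]
      simp only [qNum, Finset.sum_range_succ] at *
      rw [ih, pow_add]; ring

-- S a + q^b S b = q^b S (a+b) with S n = qNum q⁻¹ n
lemma qNum_key {k : Type*} [Field k] (q : k) (hq : q ≠ 0) (a b : ℕ) :
    qNum q⁻¹ a + q ^ b * qNum q⁻¹ b = q ^ b * qNum q⁻¹ (a + b) := by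
  have h := qNum_add q⁻¹ b a
  rw [add_comm a b, h, mul_add, ← mul_assoc, ← mul_pow, mul_inv_cancel₀ hq, one_pow, one_mul]
  ring

lemma main_identity {k : Type*} [Field k] (a b c d p : k)
    (ha : a ≠ 0) (hb : b ≠ 0) (hc : c ≠ 0) (hd : d ≠ 0)
    (hp : p = a * c * (d * b)) (m l : ℕ) :
    ((a*c)⁻¹ - a*d*p^m) * qNum p⁻¹ (m+1) - ((c*b)⁻¹ - d*b*p^l) * qNum p⁻¹ (l+1)
      = (-(c⁻¹ * p^(m+1))) *
        (qNum p⁻¹ ((m+1) + (l+1)) * (b⁻¹ - (p⁻¹)^(m+1) * p^(l+1) * a⁻¹)) := by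
  have np : p ≠ 0 := by simp [hp, ha, hb, hc, hd]
  have h2 : qNum p⁻¹ ((m+1)+(l+1)) * p^(m+1)
      = qNum p⁻¹ (l+1) + p^(m+1) * qNum p⁻¹ (m+1) := by
    have h := qNum_key p np (l+1) (m+1)
    rw [add_comm (l+1) (m+1)] at h
    rw [mul_comm]; exact h.symm
  have h1 : qNum p⁻¹ ((m+1)+(l+1)) * p^(l+1)
      = qNum p⁻¹ (m+1) + p^(l+1) * qNum p⁻¹ (l+1) := by
    have h := qNum_key p np (m+1) (l+1)
    rw [mul_comm]; exact h.symm
  have hpow : p^(m+1) * p⁻¹^(m+1) = 1 := by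
    rw [← mul_pow, mul_inv_cancel₀ np, one_pow]
  set s := qNum p⁻¹ ((m+1)+(l+1)) with hs
  set sm := qNum p⁻¹ (m+1) with hsm
  set sl := qNum p⁻¹ (l+1) with hsl
  have step1 : (-(c⁻¹ * p^(m+1))) * (s * (b⁻¹ - (p⁻¹)^(m+1) * p^(l+1) * a⁻¹))
      = -(c⁻¹*b⁻¹)*(s*p^(m+1)) + (c⁻¹*a⁻¹)*(s*p^(l+1)) := by
    linear_combination (c⁻¹*a⁻¹*p^(l+1)*s) * hpow
  rw [step1, h2, h1]
  subst hp
  field_simp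
  ring

/-- Let `χ : ℤ² × ℤ² → kˣ` be a bicharacter, `g, f ∈ ℤ²`, `α := g + f` and
`p := χ(α,α)⁻¹`. For all `m, l ≥ 1`:
`(χ(g,α)⁻¹ − χ(α,g)·p^{1−m})·[m]_p = (χ(α,f)⁻¹ − χ(f,α)·p^{1−l})·[l]_p`
holds iff `[m+l]_p · (χ(f,f)⁻¹ − p^{m−l}·χ(g,g)⁻¹) = 0` in `k`. -/
theorem lambda_leaves_equal_iff
    (k : Type*) [Field k]
    (χ : ℤ × ℤ → ℤ × ℤ → kˣ)
    (hχ₁ : ∀ x y z : ℤ × ℤ, χ (x + y) z = χ x z * χ y z)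
    (hχ₂ : ∀ x y z : ℤ × ℤ, χ x (y + z) = χ x y * χ x z)
    (g f : ℤ × ℤ) (m l : ℕ) (hm : 1 ≤ m) (hl : 1 ≤ l) :
    ((χ g (g + f) : k)⁻¹ -
        (χ (g + f) g : k) * (((χ (g + f) (g + f))⁻¹ ^ (1 - (m : ℤ)) : kˣ) : k)) *
      qNum ((χ (g + f) (g + f) : k)⁻¹) m =
    ((χ (g + f) f : k)⁻¹ -
        (χ f (g + f) : k) * (((χ (g + f) (g + f))⁻¹ ^ (1 - (l : ℤ)) : kˣ) : k)) *
      qNum ((χ (g + f) (g + f) : k)⁻¹) l ↔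
    qNum ((χ (g + f) (g + f) : k)⁻¹) (m + l) *
      ((χ f f : k)⁻¹ -
        (((χ (g + f) (g + f))⁻¹ ^ ((m : ℤ) - l) : kˣ) : k) * (χ g g : k)⁻¹) = 0 := by
  obtain ⟨m', rfl⟩ : ∃ n, m = n + 1 := ⟨m - 1, (Nat.succ_pred_eq_of_pos hm).symm⟩
  obtain ⟨l', rfl⟩ : ∃ n, l = n + 1 := ⟨l - 1, (Nat.succ_pred_eq_of_pos hl).symm⟩
  have e0 : χ (g + f) (g + f) = χ g g * χ g f * (χ f g * χ f f) := by
    rw [hχ₁, hχ₂, hχ₂]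
  have e1 : χ g (g + f) = χ g g * χ g f := hχ₂ g g f
  have e2 : χ (g + f) g = χ g g * χ f g := hχ₁ g f g
  have e3 : χ (g + f) f = χ g f * χ f f := hχ₁ g f f
  have e4 : χ f (g + f) = χ f g * χ f f := hχ₂ f g f
  set P : k := ((χ (g + f) (g + f) : kˣ) : k) with hPdef
  have nP : P ≠ 0 := Units.ne_zero _
  have hz1 : ∀ n : ℕ, (((χ (g + f) (g + f))⁻¹ ^ (1 - ((n + 1 : ℕ) : ℤ)) : kˣ) : k)
      = P ^ n := by
    intro n
    rw [Units.val_zpow_eq_zpow_val, Units.val_inv_eq_inv_val, ← hPdef]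
    rw [show (1 - ((n + 1 : ℕ) : ℤ)) = -(n : ℤ) by push_cast; ring]
    rw [zpow_neg, zpow_natCast, inv_pow, inv_inv]
  have hz2 : (((χ (g + f) (g + f))⁻¹ ^ (((m' + 1 : ℕ) : ℤ) - ((l' + 1 : ℕ) : ℤ)) : kˣ) : k)
      = (P⁻¹) ^ (m' + 1) * P ^ (l' + 1) := by
    rw [Units.val_zpow_eq_zpow_val, Units.val_inv_eq_inv_val, ← hPdef]
    rw [zpow_sub₀ (inv_ne_zero nP), div_eq_mul_inv]
    rw [zpow_natCast, zpow_natCast, inv_pow, inv_pow, inv_inv]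
  rw [hz1 m', hz1 l', hz2]
  set A : k := ((χ g g : kˣ) : k) with hA
  set B : k := ((χ f f : kˣ) : k) with hB
  set C : k := ((χ g f : kˣ) : k) with hC
  set D : k := ((χ f g : kˣ) : k) with hD
  have nA : A ≠ 0 := Units.ne_zero _
  have nB : B ≠ 0 := Units.ne_zero _
  have nC : C ≠ 0 := Units.ne_zero _
  have nD : D ≠ 0 := Units.ne_zero _
  have c1 : ((χ g (g + f) : kˣ) : k) = A * C := by rw [e1]; push_cast; ring
  have c2 : ((χ (g + f) g : kˣ) : k) = A * D := by rw [e2]; push_cast; ring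
  have c3 : ((χ (g + f) f : kˣ) : k) = C * B := by rw [e3]; push_cast; ring
  have c4 : ((χ f (g + f) : kˣ) : k) = D * B := by rw [e4]; push_cast; ring
  have hP : P = A * C * (D * B) := by rw [hPdef, e0]; push_cast; ring
  rw [c1, c2, c3, c4]
  have key := main_identity A B C D P nA nB nC nD hP m' l'
  have nfac : (-(C⁻¹ * P ^ (m' + 1))) ≠ 0 :=
    neg_ne_zero.mpr (mul_ne_zero (inv_ne_zero nC) (pow_ne_zero _ nP))
  constructor
  · intro h
    have h0 : (-(C⁻¹ * P ^ (m' + 1))) *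
        (qNum P⁻¹ ((m' + 1) + (l' + 1)) * (B⁻¹ - (P⁻¹) ^ (m' + 1) * P ^ (l' + 1) * A⁻¹)) = 0 := by
      rw [← key, h, sub_self]
    rcases mul_eq_zero.mp h0 with h' | h'
    · exact absurd h' nfac
    · exact h'
  · intro h
    rw [h, mul_zero] at key
    exact sub_eq_zero.mp key
end

section
/- Let ε₁, ε₂ be the standard basis of ℤ² and set q₁₁ := χ(ε₁,ε₁), q₁₂ := χ(ε₁,ε₂), q₂₁ := χ(ε₂,ε₁). Define λ : ℕ≥1 → k by λ(1) := χ(ε₂,ε₁)⁻¹ − χ(ε₁,ε₂) and λ(m+1) := λ(m) + χ(ε₂+m·ε₁, ε₁)⁻¹ − χ(ε₁, ε₂+m·ε₁). Then for every m ≥ 1: λ(m) = q₂₁⁻¹ · [m]_{q₁₁⁻¹} · (1 − q₁₁^{m−1}·q₁₂·q₂₁). (This is the closed formula for λ(a) at the node a on the right spine of the Stern–Brocot tree with lgfl(a) = m, i.e. with degree ε₂ + m·ε₁, left godfather of degree ε₂ + (m−1)·ε₁ and right godfather the right ghost of degree ε₁.) -/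
open scoped BigOperators

/-!
By bimultiplicativity, the increment `χ(ε₂+n·ε₁, ε₁)⁻¹ − χ(ε₁, ε₂+n·ε₁)` equals
`q₂₁⁻¹·q₁₁⁻ⁿ − q₁₂·q₁₁ⁿ`, so summing from `λ(1)` gives
`λ(m) = q₂₁⁻¹·[m]_{q₁₁⁻¹} − q₁₂·[m]_{q₁₁}`. Reversing the order of summation,
`[m]_q = q^{m−1}·[m]_{q⁻¹}`, which factors the two terms into the closed formula.
-/

theorem pow_pred_mul_qNum_inv {K : Type*} [DivisionRing K] {q : K} (hq : q ≠ 0) (n : ℕ) :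
    q ^ (n - 1) * qNum q⁻¹ n = qNum q n := by
  rw [qNum, Finset.mul_sum, qNum]
  conv_rhs => rw [← Finset.sum_range_reflect]
  refine Finset.sum_congr rfl fun i hi => ?_
  rw [inv_pow, ← pow_sub₀ q hq (by simp at hi; omega)]

theorem map_nsmul_eq_pow_of_map_add {M G : Type*} [AddMonoid M] [Group G] (f : M → G)
    (hf : ∀ x y, f (x + y) = f x * f y) (n : ℕ) (x : M) : f (n • x) = f x ^ n :=
  (MonoidHom.mk' (f ∘ Multiplicative.toAdd) fun a b => hf a.toAdd b.toAdd).map_pow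
    (Multiplicative.ofAdd x) n

theorem eq_sum_range_of_succ_eq_add {A : Type*} [AddCommMonoid A] {s u : ℕ → A}
    (h₁ : s 1 = u 0) (hs : ∀ m, 1 ≤ m → s (m + 1) = s m + u m) {m : ℕ} (hm : 1 ≤ m) :
    s m = ∑ i ∈ Finset.range m, u i := by
  induction m, hm using Nat.le_induction with
  | base => simp [h₁]
  | succ n hn ih => rw [hs n hn, ih, Finset.sum_range_succ]

/-- Let `χ : ℤ² × ℤ² → kˣ` be a bicharacter, `ε₁ = (1,0)`, `ε₂ = (0,1)`,
`q₁₁ := χ(ε₁,ε₁)`, `q₁₂ := χ(ε₁,ε₂)`, `q₂₁ := χ(ε₂,ε₁)`. If `λ : ℕ≥1 → k`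
satisfies `λ(1) = χ(ε₂,ε₁)⁻¹ − χ(ε₁,ε₂)` and
`λ(m+1) = λ(m) + χ(ε₂+m·ε₁, ε₁)⁻¹ − χ(ε₁, ε₂+m·ε₁)` for all `m ≥ 1`, then for
every `m ≥ 1`: `λ(m) = q₂₁⁻¹ · [m]_{q₁₁⁻¹} · (1 − q₁₁^{m−1}·q₁₂·q₂₁)`. -/
theorem lambda_right_spine_closed_formula
    (k : Type*) [Field k]
    (χ : ℤ × ℤ → ℤ × ℤ → kˣ)
    (hχ₁ : ∀ x y z : ℤ × ℤ, χ (x + y) z = χ x z * χ y z)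
    (hχ₂ : ∀ x y z : ℤ × ℤ, χ x (y + z) = χ x y * χ x z)
    (lam : ℕ → k)
    (hlam₁ : lam 1 = (χ (0, 1) (1, 0) : k)⁻¹ - (χ (1, 0) (0, 1) : k))
    (hlam : ∀ m : ℕ, 1 ≤ m → lam (m + 1) = lam m +
      (χ (((0, 1) : ℤ × ℤ) + m • ((1, 0) : ℤ × ℤ)) (1, 0) : k)⁻¹ -
      (χ (1, 0) (((0, 1) : ℤ × ℤ) + m • ((1, 0) : ℤ × ℤ)) : k)) :
    ∀ m : ℕ, 1 ≤ m → lam m =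
      (χ (0, 1) (1, 0) : k)⁻¹ * qNum ((χ (1, 0) (1, 0) : k)⁻¹) m *
        (1 - (χ (1, 0) (1, 0) : k) ^ (m - 1) *
          (χ (1, 0) (0, 1) : k) * (χ (0, 1) (1, 0) : k)) := by
  set a : k := (χ (1, 0) (1, 0) : k)
  set b : k := (χ (1, 0) (0, 1) : k)
  set c : k := (χ (0, 1) (1, 0) : k)
  have hincr : ∀ n : ℕ,
      (χ (((0, 1) : ℤ × ℤ) + n • ((1, 0) : ℤ × ℤ)) (1, 0) : k)⁻¹ -
        (χ (1, 0) (((0, 1) : ℤ × ℤ) + n • ((1, 0) : ℤ × ℤ)) : k) =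
        c⁻¹ * a⁻¹ ^ n - b * a ^ n := by
    intro n
    rw [hχ₁, hχ₂, map_nsmul_eq_pow_of_map_add (χ · (1, 0)) (hχ₁ · · _),
      map_nsmul_eq_pow_of_map_add (χ (1, 0)) (hχ₂ _)]
    push_cast
    rw [mul_inv, inv_pow]
  intro m hm
  rw [eq_sum_range_of_succ_eq_add (s := lam) (u := fun n => c⁻¹ * a⁻¹ ^ n - b * a ^ n)
      (by simp [hlam₁]) (fun n hn => by rw [hlam n hn, add_sub_assoc, hincr]) hm,
    Finset.sum_sub_distrib, ← Finset.mul_sum, ← Finset.mul_sum, ← qNum, ← qNum,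
    ← pow_pred_mul_qNum_inv (q := a) (Units.ne_zero _) m]
  have hc : c ≠ 0 := Units.ne_zero _
  field_simp
end

section
/- Let ε₁, ε₂ be the standard basis of ℤ² and set q₂₂ := χ(ε₂,ε₂), q₁₂ := χ(ε₁,ε₂), q₂₁ := χ(ε₂,ε₁). Define λ' : ℕ≥1 → k by λ'(1) := χ(ε₂,ε₁)⁻¹ − χ(ε₁,ε₂) and λ'(m+1) := λ'(m) + χ(ε₂, ε₁+m·ε₂)⁻¹ − χ(ε₁+m·ε₂, ε₂). Then for every m ≥ 1: λ'(m) = q₂₁⁻¹ · [m]_{q₂₂⁻¹} · (1 − q₂₂^{m−1}·q₁₂·q₂₁). (This is the closed formula for λ(a) at the node a on the left spine of the Stern–Brocot tree with rgfl(a) = m, i.e. with degree ε₁ + m·ε₂, right godfather of degree ε₁ + (m−1)·ε₂ and left godfather the left ghost of degree ε₂.) -/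
open scoped BigOperators

/-!
Since `χ` is a bicharacter, `χ(ε₂, ε₁ + i·ε₂) = q₂₁ q₂₂^i` and `χ(ε₁ + i·ε₂, ε₂) = q₁₂ q₂₂^i`, so the
recursion telescopes to `λ'(m) = ∑_{i<m} (q₂₁⁻¹ q₂₂^{-i} − q₁₂ q₂₂^i)
= q₂₁⁻¹ [m]_{q₂₂⁻¹} − q₁₂ [m]_{q₂₂}`, and the closed formula follows from the reflection
`q^{m-1} [m]_{q⁻¹} = [m]_q`.
-/

open Finset

lemma qNum_inv_mul_pow {k : Type*} [Field k] {q : k} (hq : q ≠ 0) (n : ℕ) :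
    qNum q⁻¹ (n + 1) * q ^ n = qNum q (n + 1) := by
  calc qNum q⁻¹ (n + 1) * q ^ n = ∑ i ∈ range (n + 1), q ^ (n - i) := by
        rw [qNum, sum_mul]
        refine sum_congr rfl fun i hi => ?_
        rw [pow_sub₀ q hq (Nat.lt_succ_iff.mp (mem_range.mp hi)), inv_pow, mul_comm]
    _ = qNum q (n + 1) := sum_range_reflect (q ^ ·) (n + 1)

section Bicharacter

variable {M N : Type*} [AddMonoid M] [Monoid N] (χ : M → M → N)

lemma map_add_nsmul_left (hχ : ∀ x y z, χ (x + y) z = χ x z * χ y z) (x y z : M) (n : ℕ) :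
    χ (x + n • y) z = χ x z * χ y z ^ n := by
  induction n with
  | zero => simp
  | succ n ih => rw [succ_nsmul, ← add_assoc, hχ, ih, pow_succ, mul_assoc]

lemma map_add_nsmul_right (hχ : ∀ x y z, χ x (y + z) = χ x y * χ x z) (x y z : M) (n : ℕ) :
    χ x (y + n • z) = χ x y * χ x z ^ n := by
  induction n with
  | zero => simp
  | succ n ih => rw [succ_nsmul, ← add_assoc, hχ, ih, pow_succ, mul_assoc]

end Bicharacter

lemma eq_sum_range_of_succ_eq_add_s19 {R : Type*} [AddCommMonoid R] {f g : ℕ → R}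
    (h₁ : f 1 = g 0) (h : ∀ m, 1 ≤ m → f (m + 1) = f m + g m) :
    ∀ m, 1 ≤ m → f m = ∑ i ∈ range m, g i := by
  intro m hm
  induction m, hm using Nat.le_induction with
  | base => simp [h₁]
  | succ m hm ih => rw [h m hm, ih, sum_range_succ]

lemma sum_range_inv_mul_pow_sub_mul_pow {k : Type*} [Field k] {a b q : k} (ha : a ≠ 0)
    (hq : q ≠ 0) (n : ℕ) :
    ∑ i ∈ range (n + 1), (a⁻¹ * q⁻¹ ^ i - b * q ^ i) =
      a⁻¹ * qNum q⁻¹ (n + 1) * (1 - q ^ n * b * a) := by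
  rw [sum_sub_distrib, ← mul_sum, ← mul_sum, ← qNum, ← qNum, ← qNum_inv_mul_pow hq]
  field_simp

/-- Let `χ : ℤ² × ℤ² → kˣ` be a bicharacter, `ε₁ = (1,0)`, `ε₂ = (0,1)`,
`q₂₂ := χ(ε₂,ε₂)`, `q₁₂ := χ(ε₁,ε₂)`, `q₂₁ := χ(ε₂,ε₁)`. If `λ' : ℕ≥1 → k`
satisfies `λ'(1) = χ(ε₂,ε₁)⁻¹ − χ(ε₁,ε₂)` and
`λ'(m+1) = λ'(m) + χ(ε₂, ε₁+m·ε₂)⁻¹ − χ(ε₁+m·ε₂, ε₂)` for all `m ≥ 1`, then for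
every `m ≥ 1`: `λ'(m) = q₂₁⁻¹ · [m]_{q₂₂⁻¹} · (1 − q₂₂^{m−1}·q₁₂·q₂₁)`. -/
theorem lambda_left_spine_closed_formula
    (k : Type*) [Field k]
    (χ : ℤ × ℤ → ℤ × ℤ → kˣ)
    (hχ₁ : ∀ x y z : ℤ × ℤ, χ (x + y) z = χ x z * χ y z)
    (hχ₂ : ∀ x y z : ℤ × ℤ, χ x (y + z) = χ x y * χ x z)
    (lam' : ℕ → k)
    (hlam₁ : lam' 1 = (χ (0, 1) (1, 0) : k)⁻¹ - (χ (1, 0) (0, 1) : k))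
    (hlam : ∀ m : ℕ, 1 ≤ m → lam' (m + 1) = lam' m +
      (χ (0, 1) (((1, 0) : ℤ × ℤ) + m • ((0, 1) : ℤ × ℤ)) : k)⁻¹ -
      (χ (((1, 0) : ℤ × ℤ) + m • ((0, 1) : ℤ × ℤ)) (0, 1) : k)) :
    ∀ m : ℕ, 1 ≤ m → lam' m =
      (χ (0, 1) (1, 0) : k)⁻¹ * qNum ((χ (0, 1) (0, 1) : k)⁻¹) m *
        (1 - (χ (0, 1) (0, 1) : k) ^ (m - 1) *
          (χ (1, 0) (0, 1) : k) * (χ (0, 1) (1, 0) : k)) := by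
  set a : k := (χ (0, 1) (1, 0) : k)
  set b : k := (χ (1, 0) (0, 1) : k)
  set q : k := (χ (0, 1) (0, 1) : k)
  have hsum : ∀ m, 1 ≤ m → lam' m = ∑ i ∈ range m, (a⁻¹ * q⁻¹ ^ i - b * q ^ i) := by
    refine eq_sum_range_of_succ_eq_add_s19 (by simp [hlam₁]) fun m hm => ?_
    rw [hlam m hm, map_add_nsmul_left χ hχ₁, map_add_nsmul_right χ hχ₂]
    push_cast
    rw [mul_inv, inv_pow, add_sub_assoc]
  rintro m hm
  obtain ⟨n, rfl⟩ := Nat.exists_eq_add_of_le' hm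
  rw [hsum _ hm, Nat.add_sub_cancel,
    sum_range_inv_mul_pow_sub_mul_pow (Units.ne_zero _) (Units.ne_zero _)]
end
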